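/- arXiv:2603.22363 — 5 statements merged into one kernel-verified Lean document; each statement's English description precedes it below -/
import Mathlib

section
/- Let a = 1/√3 and b = 1/√2. Define G = 5 − (a + 6b) and λ = √(1 − G²). Then 0 < G < b, and the vector (a, a + G − b, a + λ − b) ∈ ℝ³ has Euclidean norm strictly greater than 1. (This vector is the difference H₁ − H₂ of the histograms produced by the ℓ₁-descent update policy on the explicit neighboring databases of the counterexample, so the ℓ₁-descent policy is not ℓ₂-contractive.) -/
/-- Counterexample to ℓ₂-contractivity of the ℓ₁-descent policy: with
`a = 1/√3`, `b = 1/√2`, `G = 5 - (a + 6b)` and `lam = √(1 - G²)`, we have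
`0 < G < b` and the difference vector `(a, a + G - b, a + lam - b)` has
Euclidean norm strictly greater than 1. -/
theorem stmt0 :
    let a : ℝ := 1 / Real.sqrt 3
    let b : ℝ := 1 / Real.sqrt 2
    let G : ℝ := 5 - (a + 6 * b)
    let lam : ℝ := Real.sqrt (1 - G ^ 2)
    (0 < G ∧ G < b) ∧
      1 < Real.sqrt (a ^ 2 + (a + G - b) ^ 2 + (a + lam - b) ^ 2) := by
  intro a b G lam
  have s3pos : (0:ℝ) < Real.sqrt 3 := Real.sqrt_pos.mpr (by norm_num)
  have s2pos : (0:ℝ) < Real.sqrt 2 := Real.sqrt_pos.mpr (by norm_num)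
  have h3l : (1.7320508:ℝ) < Real.sqrt 3 :=
    (Real.lt_sqrt (by norm_num)).mpr (by norm_num)
  have h3u : Real.sqrt 3 < 1.7320509 :=
    (Real.sqrt_lt' (by norm_num)).mpr (by norm_num)
  have h2l : (1.4142135:ℝ) < Real.sqrt 2 :=
    (Real.lt_sqrt (by norm_num)).mpr (by norm_num)
  have h2u : Real.sqrt 2 < 1.4142136 :=
    (Real.sqrt_lt' (by norm_num)).mpr (by norm_num)
  have ha : a * Real.sqrt 3 = 1 := by
    simp only [a]; field_simp
  have hb : b * Real.sqrt 2 = 1 := by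
    simp only [b]; field_simp
  have hapos : 0 < a := by positivity
  have hbpos : 0 < b := by positivity
  have ha_lo : (0.5773502:ℝ) < a := by nlinarith
  have ha_hi : a < 0.5773503 := by nlinarith
  have hb_lo : (0.7071067:ℝ) < b := by nlinarith
  have hb_hi : b < 0.7071069 := by nlinarith
  have hG_lo : (0.18:ℝ) < G := by simp only [G]; linarith
  have hG_hi : G < 0.181 := by simp only [G]; linarith
  have hlam_lo : (0.9834:ℝ) < lam := by
    apply (Real.lt_sqrt (by norm_num)).mpr
    nlinarith
  have hlam_hi : lam < 0.984 := by
    apply (Real.sqrt_lt' (by norm_num)).mpr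
    nlinarith
  have ha2 : a ^ 2 = 1 / 3 := by
    simp only [a]
    rw [div_pow, Real.sq_sqrt (by norm_num : (3:ℝ) ≥ 0)]
    norm_num
  clear_value lam G b a
  refine ⟨⟨by linarith, by linarith⟩, ?_⟩
  apply (Real.lt_sqrt (by norm_num)).mpr
  nlinarith [sq_nonneg (a + G - b), sq_nonneg (a + lam - b - 0.8536)]
end

section
/- Let t ≥ 1 and m ≥ 1 be natural numbers, let g ∈ ℝ^t have nonnegative entries, and let λ > 0 satisfy Σ_{j=1}^t g_j² + m·λ² = 1. Let B be the m × t real matrix all of whose rows equal the vector c with c_j = g_j/(m·λ), and let J be the (t+m) × (t+m) block lower-triangular matrix [[0, 0], [B, I_m]] (zero block of size t × (t+m) on top, B and the m × m identity on the bottom). Then the ℓ₂ → ℓ₂ operator norm (largest singular value) of J equals 1/√(m·λ²). In particular, if Σ_j g_j² > 0 then the operator norm of J is strictly greater than 1, even though all eigenvalues of J lie in {0,1}. -/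
open scoped BigOperators

private lemma keyineq (m : ℕ) (C X Q S a : ℝ) (hC : 0 ≤ C) (hX : 0 ≤ X) (hQ : 0 ≤ Q)
    (h1 : a^2 ≤ C*X) (h2 : S^2 ≤ m*Q) :
    m*a^2 + 2*a*S + Q ≤ (1+m*C)*(X+Q) := by
  rcases eq_or_lt_of_le hC with hC0 | hCpos
  · have ha : a = 0 := by nlinarith [sq_nonneg a]
    subst ha
    nlinarith
  · nlinarith [sq_nonneg (a - C*S), mul_le_mul_of_nonneg_left h2 hC,
      mul_le_mul_of_nonneg_left h1 (Nat.cast_nonneg m : (0:ℝ) ≤ m), mul_pos hCpos hCpos,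
      mul_le_mul_of_nonneg_left h1 hC]

/-- The Jacobian of the ℓ₁-descent map at a point where `t` items reach the
cutoff (with gaps `g`) and the remaining `m` items receive increment `lam`,
where `∑ g j ^ 2 + m * lam ^ 2 = 1`: the block lower-triangular matrix
`J = [[0, 0], [B, I]]`, with every row of `B` equal to `c j = g j / (m * lam)`,
has ℓ₂→ℓ₂ operator norm `1 / √(m·lam²)`; in particular the norm exceeds `1`
whenever `∑ g j ^ 2 > 0`, even though all eigenvalues of `J` lie in `{0, 1}`. -/
theorem stmt1 (t m : ℕ) (ht : 1 ≤ t) (hm : 1 ≤ m)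
    (g : Fin t → ℝ) (hg : ∀ j, 0 ≤ g j)
    (lam : ℝ) (hlam : 0 < lam)
    (hbudget : ∑ j, g j ^ 2 + (m : ℝ) * lam ^ 2 = 1)
    (B : Matrix (Fin m) (Fin t) ℝ) (hB : ∀ i j, B i j = g j / ((m : ℝ) * lam))
    (J : Matrix (Fin t ⊕ Fin m) (Fin t ⊕ Fin m) ℝ)
    (hJ : J = Matrix.fromBlocks 0 0 B 1) :
    ‖Matrix.toEuclideanCLM (𝕜 := ℝ) J‖ = 1 / Real.sqrt ((m : ℝ) * lam ^ 2) ∧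
      ((0 : ℝ) < ∑ j, g j ^ 2 → 1 < ‖Matrix.toEuclideanCLM (𝕜 := ℝ) J‖) ∧
      spectrum ℝ J ⊆ {0, 1} := by
  have hm0 : (0:ℝ) < m := by exact_mod_cast Nat.lt_of_lt_of_le Nat.zero_lt_one hm
  have hml : 0 < (m : ℝ) * lam ^ 2 := by positivity
  set c : Fin t → ℝ := fun j => g j / ((m : ℝ) * lam) with hc
  set C : ℝ := ∑ j, c j ^ 2 with hCdef
  have hCnn : 0 ≤ C := Finset.sum_nonneg fun j _ => sq_nonneg _
  have hgsq : (0:ℝ) ≤ ∑ j, g j ^ 2 := Finset.sum_nonneg fun j _ => sq_nonneg _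
  have hCval : C = (∑ j, g j ^ 2) / (((m:ℝ) * lam)^2) := by
    rw [hCdef, Finset.sum_div]
    exact Finset.sum_congr rfl fun j _ => by rw [hc, div_pow]
  have hkey : 1 + (m:ℝ)*C = 1 / ((m:ℝ)*lam^2) := by
    rw [hCval]
    field_simp
    nlinarith [hbudget]
  -- norm of a Euclidean vector
  have hnormsq : ∀ (x : EuclideanSpace ℝ (Fin t ⊕ Fin m)),
      ‖x‖ = Real.sqrt ((∑ j, (x (Sum.inl j))^2) + ∑ i, (x (Sum.inr i))^2) := by
    intro x
    rw [EuclideanSpace.norm_eq]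
    congr 1
    simp only [Real.norm_eq_abs, sq_abs]
    exact Fintype.sum_sum_type _
  -- coordinates of the image
  have happ : ∀ (v : EuclideanSpace ℝ (Fin t ⊕ Fin m)) (k : Fin t ⊕ Fin m),
      (Matrix.toEuclideanCLM (𝕜 := ℝ) J v) k = Matrix.mulVec J (fun i => v i) k :=
    fun v k => congrFun (Matrix.ofLp_toEuclideanCLM (𝕜 := ℝ) J v) k
  have hinl : ∀ (v : EuclideanSpace ℝ (Fin t ⊕ Fin m)) (i : Fin t),
      (Matrix.toEuclideanCLM (𝕜 := ℝ) J v) (Sum.inl i) = 0 := by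
    intro v i
    rw [happ, Matrix.mulVec, dotProduct, hJ]
    rw [Fintype.sum_sum_type]
    simp [Matrix.fromBlocks_apply₁₁, Matrix.fromBlocks_apply₁₂]
  have hinr : ∀ (v : EuclideanSpace ℝ (Fin t ⊕ Fin m)) (i : Fin m),
      (Matrix.toEuclideanCLM (𝕜 := ℝ) J v) (Sum.inr i)
        = (∑ j, c j * v (Sum.inl j)) + v (Sum.inr i) := by
    intro v i
    rw [happ, Matrix.mulVec, dotProduct]
    rw [Fintype.sum_sum_type, hJ]
    simp only [Matrix.fromBlocks_apply₂₁, Matrix.fromBlocks_apply₂₂]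
    congr 1
    · exact Finset.sum_congr rfl fun j _ => by rw [hB, hc]
    · simp [Matrix.one_apply]
  set K := Real.sqrt (1 + (m:ℝ)*C) with hK
  have hK1 : 1 ≤ 1 + (m:ℝ)*C := by nlinarith
  have hnorm : ‖Matrix.toEuclideanCLM (𝕜 := ℝ) J‖ = K := by
    apply le_antisymm
    · apply ContinuousLinearMap.opNorm_le_bound _ (Real.sqrt_nonneg _)
      intro v
      set a := ∑ j, c j * v (Sum.inl j) with ha
      set X := ∑ j, (v (Sum.inl j))^2 with hX
      set Q := ∑ i, (v (Sum.inr i))^2 with hQ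
      set S := ∑ i, v (Sum.inr i) with hS
      have hXnn : 0 ≤ X := Finset.sum_nonneg fun j _ => sq_nonneg _
      have hQnn : 0 ≤ Q := Finset.sum_nonneg fun j _ => sq_nonneg _
      have h1 : a^2 ≤ C * X := by
        have := Finset.sum_mul_sq_le_sq_mul_sq Finset.univ c (fun j => v (Sum.inl j))
        simpa [← ha, ← hCdef, ← hX] using this
      have h2 : S^2 ≤ (m:ℝ) * Q := by
        have := sq_sum_le_card_mul_sum_sq (s := (Finset.univ : Finset (Fin m)))
          (f := fun i : Fin m => v (Sum.inr i))
        simpa [← hS, ← hQ] using this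
      have himg : ‖Matrix.toEuclideanCLM (𝕜 := ℝ) J v‖
          = Real.sqrt (∑ i : Fin m, (a + v (Sum.inr i))^2) := by
        rw [hnormsq]
        have e1 : ∑ j : Fin t, (Matrix.toEuclideanCLM (𝕜 := ℝ) J v (Sum.inl j))^2 = 0 :=
          Finset.sum_eq_zero fun j _ => by rw [hinl]; ring
        have e2 : ∑ i : Fin m, (Matrix.toEuclideanCLM (𝕜 := ℝ) J v (Sum.inr i))^2
            = ∑ i : Fin m, (a + v (Sum.inr i))^2 :=
          Finset.sum_congr rfl fun i _ => by rw [hinr]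
        rw [e1, e2, zero_add]
      have hexp : ∑ i : Fin m, (a + v (Sum.inr i))^2 = (m:ℝ)*a^2 + 2*a*S + Q := by
        simp only [add_sq, Finset.sum_add_distrib, Finset.sum_const, Finset.card_univ,
          Fintype.card_fin, nsmul_eq_mul, ← Finset.mul_sum, ← hS, ← hQ]
        try ring
      rw [himg, hexp, hnormsq, ← hX, ← hQ, ← Real.sqrt_mul (by positivity : (0:ℝ) ≤ 1 + (m:ℝ)*C)]
      exact Real.sqrt_le_sqrt (keyineq m C X Q S a hCnn hXnn hQnn h1 h2)
    · -- lower bound via witness vector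
      set w : EuclideanSpace ℝ (Fin t ⊕ Fin m) :=
        (WithLp.equiv 2 _).symm (Sum.elim (fun j => (m:ℝ) * c j) (fun _ => (1:ℝ))) with hw
      have hwl : ∀ j, w (Sum.inl j) = (m:ℝ) * c j := fun j => rfl
      have hwr : ∀ i, w (Sum.inr i) = 1 := fun i => rfl
      have haw : (∑ j, c j * w (Sum.inl j)) = (m:ℝ) * C := by
        rw [hCdef, Finset.mul_sum]
        exact Finset.sum_congr rfl fun j _ => by rw [hwl]; ring
      have himg : ‖Matrix.toEuclideanCLM (𝕜 := ℝ) J w‖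
          = Real.sqrt ((m:ℝ) * ((m:ℝ)*C + 1)^2) := by
        rw [hnormsq]
        have e1 : ∑ j : Fin t, (Matrix.toEuclideanCLM (𝕜 := ℝ) J w (Sum.inl j))^2 = 0 :=
          Finset.sum_eq_zero fun j _ => by rw [hinl]; ring
        have e2 : ∑ i : Fin m, (Matrix.toEuclideanCLM (𝕜 := ℝ) J w (Sum.inr i))^2
            = (m:ℝ) * ((m:ℝ)*C + 1)^2 := by
          rw [Finset.sum_congr rfl fun i (_ : i ∈ Finset.univ) => by rw [hinr, haw, hwr]]
          simp [Finset.sum_const, Finset.card_univ]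
        rw [e1, e2, zero_add]
      have hwnorm : ‖w‖ = Real.sqrt ((m:ℝ) * ((m:ℝ)*C + 1)) := by
        rw [hnormsq]
        congr 1
        have e1 : ∑ j : Fin t, (w (Sum.inl j))^2 = (m:ℝ)^2 * C := by
          have h : ∀ j : Fin t, (w (Sum.inl j))^2 = (m:ℝ)^2 * c j ^ 2 := fun j => by
            rw [hwl]; ring
          rw [Finset.sum_congr rfl fun j _ => h j, ← Finset.mul_sum, ← hCdef]
        have e2 : ∑ i : Fin m, (w (Sum.inr i))^2 = (m:ℝ) := by
          rw [Finset.sum_congr rfl fun i (_ : i ∈ Finset.univ) => by rw [hwr]]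
          simp
        rw [e1, e2]
        ring
      have hwpos : 0 < ‖w‖ := by
        rw [hwnorm]
        apply Real.sqrt_pos.mpr
        nlinarith
      have hfw : ‖Matrix.toEuclideanCLM (𝕜 := ℝ) J w‖ = K * ‖w‖ := by
        rw [himg, hwnorm, hK, ← Real.sqrt_mul (by positivity)]
        congr 1
        ring
      have := (Matrix.toEuclideanCLM (𝕜 := ℝ) J).le_opNorm w
      rw [hfw] at this
      exact le_of_mul_le_mul_right this hwpos
  refine ⟨?_, ?_, ?_⟩
  · rw [hnorm, hK, hkey, one_div, one_div, Real.sqrt_inv]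
  · intro hpos
    rw [hnorm, hK, hkey]
    have h1' : (m:ℝ)*lam^2 < 1 := by nlinarith
    have : (1:ℝ) < 1 / ((m:ℝ)*lam^2) := by
      rw [lt_div_iff₀ hml]; linarith
    calc (1:ℝ) = Real.sqrt 1 := by simp
    _ < Real.sqrt (1 / ((m:ℝ)*lam^2)) := Real.sqrt_lt_sqrt (by norm_num) this
  · intro x hx
    rw [spectrum.mem_iff] at hx
    by_contra hxmem
    simp only [Set.mem_insert_iff, Set.mem_singleton_iff, not_or] at hxmem
    obtain ⟨hx0, hx1⟩ := hxmem
    apply hx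
    rw [Matrix.isUnit_iff_isUnit_det]
    have : (algebraMap ℝ (Matrix (Fin t ⊕ Fin m) (Fin t ⊕ Fin m) ℝ)) x - J
        = Matrix.fromBlocks (x • 1) 0 (-B) (x • 1 - 1) := by
      rw [Algebra.algebraMap_eq_smul_one, hJ, ← Matrix.fromBlocks_one, Matrix.fromBlocks_smul,
        sub_eq_add_neg, Matrix.fromBlocks_neg, Matrix.fromBlocks_add]
      congr 1 <;> simp [sub_eq_add_neg]
    rw [this, Matrix.det_fromBlocks_zero₁₂]
    have hd1 : (x • (1 : Matrix (Fin t) (Fin t) ℝ)).det = x ^ t := by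
      rw [Matrix.det_smul, Matrix.det_one, Fintype.card_fin, mul_one]
    have h2 : (x • (1 : Matrix (Fin m) (Fin m) ℝ) - 1) = (x - 1) • 1 := by
      rw [sub_smul, one_smul]
    have hd2 : (x • (1 : Matrix (Fin m) (Fin m) ℝ) - 1).det = (x - 1) ^ m := by
      rw [h2, Matrix.det_smul, Matrix.det_one, Fintype.card_fin, mul_one]
    rw [hd1, hd2]
    exact (isUnit_iff_ne_zero).mpr
      (mul_ne_zero (pow_ne_zero _ hx0) (pow_ne_zero _ (sub_ne_zero.mpr hx1)))
end

section
/- Let σ = 127/50 (i.e., σ = 2.54). Then Φ((1/10 − 5)/σ) > 651 · Φ(−10/σ), where Φ is the standard normal CDF. (That is, with threshold 5 for observed items and threshold 10 for unobserved items, histogram value 1/10 for the observed case and 0 for the unobserved case, the ratio of release probabilities exceeds 651.) -/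
/-!
Writing `Φ(-c) = 1/2 - (2π)^{-1/2} ∫₀ᶜ exp (-t²/2) dt`, the claim becomes a numerical inequality
between two such integrals and `√(2π)`. Each integral is approximated by integrating the Taylor
polynomial of `exp (-t²/2)` term by term; the tail bound `|eˣ - ∑_{m<N} xᵐ/m!| ≤ 2|x|ᴺ/N!`,
valid for `2|x| ≤ N + 1`, makes the error explicit. With `N = 36` at `c = 500/127`, `N = 14` at
`c = 245/127` and `π < 3.14159265358979323847`, the rational bounds suffice; this precision is
needed because the true ratio is only about `651.05`.
-/

open MeasureTheory ProbabilityTheory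

/-- The standard normal cumulative distribution function. -/
noncomputable def stdNormalCDF (x : ℝ) : ℝ :=
  ((gaussianReal 0 1) (Set.Iic x)).toReal

open Real Finset
open scoped Nat

lemma abs_exp_sub_sum_range_le {x : ℝ} {N : ℕ} (hx : 2 * |x| ≤ N + 1) :
    |exp x - ∑ m ∈ range N, x ^ m / m !| ≤ 2 * |x| ^ N / N ! := by
  have hx' : ‖(x : ℂ)‖ / N.succ ≤ 1 / 2 := by
    rw [Complex.norm_real, Real.norm_eq_abs, div_le_iff₀ (by positivity)]
    push_cast
    linarith
  have h := Complex.exp_bound' hx'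
  rw [← Complex.ofReal_exp, Complex.norm_real, Real.norm_eq_abs] at h
  have hcast : (exp x : ℂ) - ∑ m ∈ range N, (x : ℂ) ^ m / m ! =
      ((exp x - ∑ m ∈ range N, x ^ m / m ! : ℝ) : ℂ) := by
    push_cast; rfl
  rw [hcast, Complex.norm_real, Real.norm_eq_abs] at h
  exact h.trans_eq (by ring)

lemma abs_exp_neg_sq_half_sub_sum_le {t : ℝ} {N : ℕ} (ht : t ^ 2 ≤ N + 1) :
    |exp (-(t ^ 2 / 2)) - ∑ m ∈ range N, (-1 / 2) ^ m / m ! * t ^ (2 * m)| ≤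
      2 * (1 / 2) ^ N / N ! * t ^ (2 * N) := by
  have hpow : ∀ m : ℕ, (-(t ^ 2 / 2)) ^ m = (-1 / 2) ^ m * t ^ (2 * m) := fun m => by
    rw [pow_mul, ← mul_pow]; ring
  have habs : |-(t ^ 2 / 2)| = t ^ 2 / 2 := by rw [abs_neg, abs_of_nonneg (by positivity)]
  have h := abs_exp_sub_sum_range_le (x := -(t ^ 2 / 2)) (N := N) (by rw [habs]; linarith)
  rw [habs] at h
  simp only [hpow] at h
  convert h using 3
  · exact sum_congr rfl fun m _ => by ring
  · rw [div_pow, div_pow, one_pow, pow_mul]; ring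

noncomputable def gaussianIntegralTaylor (c : ℝ) (N : ℕ) : ℝ :=
  ∑ m ∈ range N, (-1 / 2) ^ m / m ! * (c ^ (2 * m + 1) / (2 * m + 1))

lemma integral_const_mul_pow_two_mul (a c : ℝ) (m : ℕ) :
    ∫ t in (0 : ℝ)..c, a * t ^ (2 * m) = a * (c ^ (2 * m + 1) / (2 * m + 1)) := by
  rw [intervalIntegral.integral_const_mul, integral_pow, zero_pow (Nat.succ_ne_zero _), sub_zero]
  push_cast
  rfl

lemma abs_integral_exp_neg_sq_half_sub_taylor_le {c : ℝ} (hc : 0 ≤ c) {N : ℕ}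
    (hN : c ^ 2 ≤ N + 1) :
    |(∫ t in (0 : ℝ)..c, exp (-(t ^ 2 / 2))) - gaussianIntegralTaylor c N| ≤
      2 * (1 / 2) ^ N / N ! * (c ^ (2 * N + 1) / (2 * N + 1)) := by
  have hpoly : Continuous fun t : ℝ => ∑ m ∈ range N, (-1 / 2) ^ m / m ! * t ^ (2 * m) := by
    fun_prop
  have htaylor : ∫ t in (0 : ℝ)..c, ∑ m ∈ range N, (-1 / 2) ^ m / m ! * t ^ (2 * m) =
      gaussianIntegralTaylor c N := by
    rw [intervalIntegral.integral_finsetSum fun m _ => (by fun_prop : Continuous fun t : ℝ =>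
      (-1 / 2) ^ m / m ! * t ^ (2 * m)).intervalIntegrable 0 c]
    exact sum_congr rfl fun m _ => integral_const_mul_pow_two_mul _ c m
  have hexp : Continuous fun t : ℝ => exp (-(t ^ 2 / 2)) := by fun_prop
  rw [← htaylor, ← intervalIntegral.integral_sub (hexp.intervalIntegrable 0 c)
    (hpoly.intervalIntegrable 0 c), ← integral_const_mul_pow_two_mul, ← Real.norm_eq_abs]
  have hbound : Continuous fun t : ℝ => 2 * (1 / 2) ^ N / N ! * t ^ (2 * N) := by fun_prop
  refine intervalIntegral.norm_integral_le_of_norm_le hc (ae_of_all _ fun t ht => ?_)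
    (hbound.intervalIntegrable 0 c)
  refine abs_exp_neg_sq_half_sub_sum_le (hN.trans' ?_)
  exact pow_le_pow_left₀ ht.1.le ht.2 2

lemma stdNormalCDF_eq_integral (x : ℝ) :
    stdNormalCDF x = (√(2 * π))⁻¹ * ∫ t in Set.Iic x, exp (-(t ^ 2 / 2)) := by
  rw [stdNormalCDF, gaussianReal_apply_eq_integral 0 one_ne_zero, ENNReal.toReal_ofReal
    (setIntegral_nonneg measurableSet_Iic fun t _ => gaussianPDFReal_nonneg 0 1 t),
    ← integral_const_mul]
  simp only [gaussianPDFReal, NNReal.coe_one, mul_one, sub_zero, neg_div]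

lemma integrable_exp_neg_sq_half : Integrable fun t : ℝ => exp (-(t ^ 2 / 2)) := by
  simpa only [neg_mul, one_div, ← div_eq_inv_mul] using
    integrable_exp_neg_mul_sq (b := (1 / 2 : ℝ)) (by norm_num)

lemma integral_Iic_zero_exp_neg_sq_half :
    ∫ t in Set.Iic (0 : ℝ), exp (-(t ^ 2 / 2)) = √(2 * π) / 2 := by
  have h := integral_gaussian_Ioi (1 / 2)
  simp only [neg_mul, one_div, ← div_eq_inv_mul, div_inv_eq_mul] at h
  have hsymm := integral_comp_neg_Iic 0 fun t : ℝ => exp (-(t ^ 2 / 2))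
  simp only [neg_zero, neg_sq] at hsymm
  rw [hsymm, h, mul_comm]

lemma stdNormalCDF_neg (c : ℝ) :
    stdNormalCDF (-c) = 1 / 2 - (√(2 * π))⁻¹ * ∫ t in (0 : ℝ)..c, exp (-(t ^ 2 / 2)) := by
  have hsplit := intervalIntegral.integral_Iic_sub_Iic (μ := volume) (a := -c) (b := 0)
    integrable_exp_neg_sq_half.integrableOn integrable_exp_neg_sq_half.integrableOn
  have hflip : ∫ t in -c..0, exp (-(t ^ 2 / 2)) = ∫ t in (0 : ℝ)..c, exp (-(t ^ 2 / 2)) := by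
    have h := intervalIntegral.integral_comp_neg (a := (0 : ℝ)) (b := c)
      fun t : ℝ => exp (-(t ^ 2 / 2))
    simp only [neg_zero, neg_sq] at h
    exact h.symm
  rw [integral_Iic_zero_exp_neg_sq_half, hflip] at hsplit
  have hs : √(2 * π) ≠ 0 := by positivity
  rw [stdNormalCDF_eq_integral, ← hsplit]
  field_simp
  ring

/-- The adaptive-thresholding counterexample: with `σ = 2.54`, observed
threshold `5`, unobserved threshold `10`, and histogram values `1/10`
(observed) versus `0` (unobserved), the ratio of release probabilities
exceeds `651`. -/
theorem stmt6 :
    651 * stdNormalCDF (-10 / (127 / 50)) < stdNormalCDF ((1 / 10 - 5) / (127 / 50)) := by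
  rw [show (-10 / (127 / 50) : ℝ) = -(500 / 127) by norm_num,
    show ((1 / 10 - 5) / (127 / 50) : ℝ) = -(245 / 127) by norm_num,
    stdNormalCDF_neg, stdNormalCDF_neg]
  have hfar := abs_sub_le_iff.1 <| abs_integral_exp_neg_sq_half_sub_taylor_le
    (c := 500 / 127) (N := 36) (by norm_num) (by norm_num)
  have hnear := abs_sub_le_iff.1 <| abs_integral_exp_neg_sq_half_sub_taylor_le
    (c := 245 / 127) (N := 14) (by norm_num) (by norm_num)
  norm_num [gaussianIntegralTaylor, sum_range_succ, Nat.factorial] at hfar hnear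
  have hsqrt : √(2 * π) < 2.50662828 := by
    rw [sqrt_lt' (by norm_num)]
    linarith [pi_lt_d20]
  set Ifar := ∫ t in (0 : ℝ)..500 / 127, exp (-(t ^ 2 / 2))
  set Inear := ∫ t in (0 : ℝ)..245 / 127, exp (-(t ^ 2 / 2))
  have hgap : 325 < (√(2 * π))⁻¹ * (651 * Ifar - Inear) := by
    rw [lt_inv_mul_iff₀ (by positivity)]
    linarith
  linarith [show (√(2 * π))⁻¹ * (651 * Ifar - Inear) =
    651 * ((√(2 * π))⁻¹ * Ifar) - (√(2 * π))⁻¹ * Inear by ring]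
end

section
/- Let Δ > 0, ε ≥ 0, δ ∈ [0,1], and let μ₀ and μ₁ be Borel probability measures on the interval [0, Δ] whose cumulative distribution functions satisfy F₀(t) ≤ e^ε·F₁(t) + δ for every t ∈ [0, Δ]. Let a = ∫ c dμ₀(c) and b = ∫ (Δ − c) dμ₁(c). Then a + e^ε·b ≥ (1 − δ)·Δ, and consequently max(a, b) ≥ (1 − δ)·Δ/(1 + e^ε). -/
/-!
By the layer-cake formula, `a = ∫₀^Δ μ₀[t, ∞) dt` and, after the reflection `t ↦ Δ - t`,
`b = ∫₀^Δ F₁(t) dt`. Pointwise `μ₀[t, ∞) ≥ 1 - F₀(t) ≥ 1 - e^ε F₁(t) - δ`, and integrating over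
`[0, Δ]` gives `a + e^ε b ≥ (1 - δ) Δ`; the bound on `max a b` follows from
`a + e^ε b ≤ (1 + e^ε) max a b`.
-/

open MeasureTheory Set

section LayerCake

variable {μ : Measure ℝ} [IsFiniteMeasure μ] {M : ℝ}

lemma integral_eq_intervalIntegral_measureReal_le {f : ℝ → ℝ} (hf : Measurable f) (hM : 0 ≤ M)
    (hf_nonneg : 0 ≤ᵐ[μ] f) (hf_le : f ≤ᵐ[μ] fun _ ↦ M) :
    ∫ c, f c ∂μ = ∫ t in 0..M, μ.real {c | t ≤ f c} := by
  have hf_int : Integrable f μ := by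
    refine .of_bound hf.aestronglyMeasurable M ?_
    filter_upwards [hf_nonneg, hf_le] with c h₀ h₁
    rwa [Real.norm_of_nonneg h₀]
  rw [hf_int.integral_eq_integral_Ioc_meas_le hf_nonneg hf_le, intervalIntegral.integral_of_le hM]

variable (hM : 0 ≤ M) (hμ : μ (Icc 0 M)ᶜ = 0)
include hM hμ

lemma integral_id_eq_intervalIntegral_measureReal_Ici :
    ∫ c, c ∂μ = ∫ t in 0..M, μ.real (Ici t) := by
  have hsupp : ∀ᵐ c ∂μ, c ∈ Icc 0 M := mem_ae_iff.mpr hμ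
  exact integral_eq_intervalIntegral_measureReal_le measurable_id hM
    (hsupp.mono fun _ hc ↦ hc.1) (hsupp.mono fun _ hc ↦ hc.2)

lemma integral_sub_eq_intervalIntegral_measureReal_Iic :
    ∫ c, (M - c) ∂μ = ∫ t in 0..M, μ.real (Iic t) := by
  have hsupp : ∀ᵐ c ∂μ, c ∈ Icc 0 M := mem_ae_iff.mpr hμ
  have hlevel : ∀ t, {c | t ≤ M - c} = Iic (M - t) := fun t ↦
    Set.ext fun c ↦ le_sub_comm (a := t) (b := M) (c := c)
  rw [integral_eq_intervalIntegral_measureReal_le (f := fun c ↦ M - c) (by fun_prop) hM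
      (hsupp.mono fun _ hc ↦ sub_nonneg.mpr hc.2)
      (hsupp.mono fun _ hc ↦ sub_le_self M hc.1)]
  simp only [hlevel]
  rw [intervalIntegral.integral_comp_sub_left (fun t ↦ μ.real (Iic t)), sub_self, sub_zero]

end LayerCake

lemma one_sub_measureReal_Iic_le_measureReal_Ici {μ : Measure ℝ} [IsProbabilityMeasure μ]
    (t : ℝ) : 1 - μ.real (Iic t) ≤ μ.real (Ici t) := by
  rw [← compl_Iio, probReal_compl_eq_one_sub measurableSet_Iio]
  exact sub_le_sub_left (measureReal_mono Iio_subset_Iic_self) 1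

theorem sub_mul_le_integral_add_mul_integral_sub {μ₀ μ₁ : Measure ℝ}
    [IsProbabilityMeasure μ₀] [IsProbabilityMeasure μ₁] {M k δ : ℝ} (hM : 0 ≤ M)
    (h₀ : μ₀ (Icc 0 M)ᶜ = 0) (h₁ : μ₁ (Icc 0 M)ᶜ = 0)
    (hcdf : ∀ t ∈ Icc 0 M, μ₀.real (Iic t) ≤ k * μ₁.real (Iic t) + δ) :
    (1 - δ) * M ≤ ∫ c, c ∂μ₀ + k * ∫ c, (M - c) ∂μ₁ := by
  have hF₀ : Antitone fun t ↦ μ₀.real (Ici t) := fun _ _ hst ↦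
    measureReal_mono (Ici_subset_Ici.mpr hst)
  have hF₁ : Monotone fun t ↦ μ₁.real (Iic t) := fun _ _ hst ↦
    measureReal_mono (Iic_subset_Iic.mpr hst)
  rw [integral_id_eq_intervalIntegral_measureReal_Ici hM h₀,
    integral_sub_eq_intervalIntegral_measureReal_Iic hM h₁,
    ← intervalIntegral.integral_const_mul,
    ← intervalIntegral.integral_add hF₀.intervalIntegrable (hF₁.intervalIntegrable.const_mul k)]
  calc (1 - δ) * M = ∫ _ in 0..M, (1 - δ) := by
        rw [intervalIntegral.integral_const, sub_zero, smul_eq_mul, mul_comm]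
    _ ≤ _ := by
      refine intervalIntegral.integral_mono_on hM intervalIntegrable_const
        (hF₀.intervalIntegrable.add (hF₁.intervalIntegrable.const_mul k)) fun t ht ↦ ?_
      linarith [hcdf t ht, one_sub_measureReal_Iic_le_measureReal_Ici (μ := μ₀) t]

lemma div_one_add_le_max_of_le_add_mul {α : Type*} [Field α] [LinearOrder α]
    [IsStrictOrderedRing α] {x a b k : α} (hk : 0 ≤ k) (h : x ≤ a + k * b) :
    x / (1 + k) ≤ max a b := by
  rw [div_le_iff₀ (by positivity)]
  calc x ≤ a + k * b := h
    _ ≤ max a b + k * max a b := by gcongr <;> simp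
    _ = max a b * (1 + k) := by ring

theorem stmt11_general (Δ : ℝ) (hΔ : 0 < Δ) (ε : ℝ) (δ : ℝ)
    (μ₀ μ₁ : Measure ℝ) [IsProbabilityMeasure μ₀] [IsProbabilityMeasure μ₁]
    (hsupp₀ : μ₀ (Set.Icc 0 Δ)ᶜ = 0) (hsupp₁ : μ₁ (Set.Icc 0 Δ)ᶜ = 0)
    (hdp : ∀ t ∈ Set.Icc (0 : ℝ) Δ,
      (μ₀ (Set.Iic t)).toReal ≤ Real.exp ε * (μ₁ (Set.Iic t)).toReal + δ)
    (a b : ℝ) (ha : a = ∫ c, c ∂μ₀) (hb : b = ∫ c, (Δ - c) ∂μ₁) :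
    (1 - δ) * Δ ≤ a + Real.exp ε * b ∧
      (1 - δ) * Δ / (1 + Real.exp ε) ≤ max a b := by
  have hsum : (1 - δ) * Δ ≤ a + Real.exp ε * b := by
    subst ha hb
    exact sub_mul_le_integral_add_mul_integral_sub hΔ.le hsupp₀ hsupp₁ hdp
  exact ⟨hsum, div_one_add_le_max_of_le_add_mul (Real.exp_nonneg ε) hsum⟩

/-- Analytic core of the additive privacy lower bound: if `μ₀, μ₁` are
probability measures supported on `[0, Δ]` whose CDFs satisfy
`F₀(t) ≤ e^ε F₁(t) + δ` for all `t ∈ [0, Δ]`, then with `a = ∫ c dμ₀` and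
`b = ∫ (Δ - c) dμ₁` we have `a + e^ε·b ≥ (1 - δ)·Δ`, and consequently
`max(a, b) ≥ (1 - δ)·Δ/(1 + e^ε)`. -/
theorem stmt11 (Δ : ℝ) (hΔ : 0 < Δ) (ε : ℝ) (hε : 0 ≤ ε) (δ : ℝ)
    (hδ : δ ∈ Set.Icc (0 : ℝ) 1)
    (μ₀ μ₁ : Measure ℝ) [IsProbabilityMeasure μ₀] [IsProbabilityMeasure μ₁]
    (hsupp₀ : μ₀ (Set.Icc 0 Δ)ᶜ = 0) (hsupp₁ : μ₁ (Set.Icc 0 Δ)ᶜ = 0)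
    (hdp : ∀ t ∈ Set.Icc (0 : ℝ) Δ,
      (μ₀ (Set.Iic t)).toReal ≤ Real.exp ε * (μ₁ (Set.Iic t)).toReal + δ)
    (a b : ℝ) (ha : a = ∫ c, c ∂μ₀) (hb : b = ∫ c, (Δ - c) ∂μ₁) :
    (1 - δ) * Δ ≤ a + Real.exp ε * b ∧
      (1 - δ) * Δ / (1 + Real.exp ε) ≤ max a b :=
  stmt11_general Δ hΔ ε δ μ₀ μ₁ hsupp₀ hsupp₁ hdp a b ha hb
end

section
/- Fix an integer k ≥ 1, a real Δ > 0, and z ∈ {0, Δ}. Let X_z = {z} ∪ {4jΔ : j = 1, …, k−1} ⊂ ℝ and let C be a multiset of k real numbers contained in [0, 4kΔ], with smallest element c₍₁₎ (and, when k ≥ 2, second-smallest element c₍₂₎). Define T(C) = min(c₍₁₎, Δ) ∈ [0, Δ]. Then Σ_{x∈X_z} min_{c∈C} |x − c| ≥ |z − T(C)|. -/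
open Finset

/-- Geometric core of the additive lower bound for private `k`-median: for
`z ∈ {0, Δ}`, the dataset `X_z = {z} ∪ {4jΔ : j = 1,…,k-1}`, and any multiset
`C` of `k` centers inside `[0, 4kΔ]` with smallest element `c₁`, the
one-dimensional `k`-median cost of `X_z` with centers `C` is at least
`|z - min(c₁, Δ)|`. -/
theorem stmt12 (k : ℕ) (hk : 1 ≤ k) (Δ : ℝ) (hΔ : 0 < Δ)
    (z : ℝ) (hz : z = 0 ∨ z = Δ)
    (C : Multiset ℝ) (hcard : Multiset.card C = k)
    (hmem : ∀ c ∈ C, c ∈ Set.Icc (0 : ℝ) (4 * k * Δ))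
    (hCne : C.toFinset.Nonempty) :
    |z - min (C.toFinset.min' hCne) Δ| ≤
      ∑ x ∈ insert z ((Finset.Icc 1 (k - 1)).image fun j : ℕ => 4 * j * Δ),
        C.toFinset.inf' hCne fun c => |x - c| := by
  set m := C.toFinset.min' hCne with hm
  have hmC : m ∈ C.toFinset := Finset.min'_mem _ _
  have hm0 : 0 ≤ m := (hmem m (Multiset.mem_toFinset.mp hmC)).1
  set X := insert z ((Finset.Icc 1 (k-1)).image fun j : ℕ => 4 * j * Δ) with hX
  have hnn : ∀ x ∈ X, 0 ≤ C.toFinset.inf' hCne fun c => |x - c| := by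
    intro x _
    exact Finset.le_inf' _ _ fun c _ => abs_nonneg _
  have hzX : z ∈ X := Finset.mem_insert_self _ _
  rcases hz with hz0 | hzΔ
  · subst hz0
    have h1 : |(0:ℝ) - min m Δ| = min m Δ := by
      rw [zero_sub, abs_neg, abs_of_nonneg (le_min hm0 hΔ.le)]
    rw [h1]
    calc min m Δ ≤ C.toFinset.inf' hCne fun c => |(0:ℝ) - c| := by
          apply Finset.le_inf'
          intro c hc
          have hc0 := (hmem c (Multiset.mem_toFinset.mp hc)).1
          have hmc : m ≤ c := Finset.min'_le _ _ hc
          rw [zero_sub, abs_neg, abs_of_nonneg hc0]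
          exact le_trans (min_le_left _ _) hmc
      _ ≤ _ := Finset.single_le_sum hnn hzX
  · subst hzΔ
    rcases le_or_gt z m with hzm | hmz
    · rw [min_eq_right hzm, sub_self, abs_zero]
      exact Finset.sum_nonneg hnn
    · rw [min_eq_left hmz.le, abs_of_nonneg (by linarith)]
      by_contra hcon
      push_neg at hcon
      have hterm : ∀ x ∈ X, (C.toFinset.inf' hCne fun c => |x - c|) < z - m := by
        intro x hx
        calc (C.toFinset.inf' hCne fun c => |x - c|)
            ≤ ∑ y ∈ X, C.toFinset.inf' hCne fun c => |y - c| :=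
              Finset.single_le_sum hnn hx
          _ < z - m := hcon
      set p : ℕ → ℝ := fun j => if j = 0 then z else 4 * j * z with hp
      have hple : ∀ j : ℕ, 1 ≤ j → (4:ℝ) * z ≤ 4 * j * z := by
        intro j h1
        have : (1:ℝ) ≤ (j:ℝ) := by exact_mod_cast h1
        nlinarith
      have hpX : ∀ j ∈ Finset.Icc 0 (k-1), p j ∈ X := by
        intro j hj
        by_cases h0 : j = 0
        · simp [hp, h0, hX]
        · simp only [hp, if_neg h0]
          apply Finset.mem_insert_of_mem
          exact Finset.mem_image_of_mem _
            (Finset.mem_Icc.mpr ⟨Nat.one_le_iff_ne_zero.mpr h0, (Finset.mem_Icc.mp hj).2⟩)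
      have hchoice : ∀ j ∈ Finset.Icc 0 (k-1),
          ∃ c ∈ C.toFinset, |p j - c| < z - m ∧ c ≠ m := by
        intro j hj
        have h := hterm (p j) (hpX j hj)
        rw [Finset.inf'_lt_iff] at h
        obtain ⟨c, hc, hlt⟩ := h
        refine ⟨c, hc, hlt, ?_⟩
        intro hcm
        subst hcm
        by_cases h0 : j = 0
        · simp only [hp, h0, if_pos] at hlt
          rw [abs_of_nonneg (by linarith)] at hlt
          linarith
        · have h4 := hple j (Nat.one_le_iff_ne_zero.mpr h0)
          simp only [hp, if_neg h0] at hlt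
          rw [abs_of_nonneg (by linarith)] at hlt
          linarith
      choose! g hg1 hg2 hg3 using hchoice
      have hsep : ∀ i j : ℕ, i < j → j ≤ k - 1 → 2 * (z - m) < p j - p i := by
        intro i j hij hjk
        have hj1 : 1 ≤ j := hij.trans_le' (Nat.zero_le i)
        have h4j := hple j hj1
        by_cases h0 : i = 0
        · simp only [hp, h0, if_pos, if_neg (Nat.one_le_iff_ne_zero.mp hj1)]
          linarith
        · have hi1 : 1 ≤ i := Nat.one_le_iff_ne_zero.mpr h0
          simp only [hp, if_neg h0, if_neg (Nat.one_le_iff_ne_zero.mp hj1)]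
          have hij' : (i:ℝ) + 1 ≤ (j:ℝ) := by exact_mod_cast hij
          nlinarith
      have hinj : Set.InjOn g (Finset.Icc 0 (k-1) : Finset ℕ) := by
        intro i hi j hj hgij
        by_contra hne
        rcases lt_or_gt_of_ne hne with h | h
        · have hs := hsep i j h (Finset.mem_Icc.mp hj).2
          have t1 := hg2 i hi
          have t2 := hg2 j hj
          rw [hgij] at t1
          have := abs_sub_abs_le_abs_sub (p i - g j) (p j - g j)
          have htri : |p i - p j| ≤ |p i - g j| + |p j - g j| := by
            have := abs_sub (p i - g j) (p j - g j)
            calc |p i - p j| = |(p i - g j) - (p j - g j)| := by ring_nf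
              _ ≤ |p i - g j| + |p j - g j| := abs_sub _ _
          have : p j - p i ≤ |p i - p j| := by
            rw [abs_sub_comm]; exact le_abs_self _
          linarith
        · have hs := hsep j i h (Finset.mem_Icc.mp hi).2
          have t1 := hg2 i hi
          have t2 := hg2 j hj
          rw [hgij] at t1
          have htri : |p j - p i| ≤ |p j - g j| + |p i - g j| := by
            calc |p j - p i| = |(p j - g j) - (p i - g j)| := by ring_nf
              _ ≤ |p j - g j| + |p i - g j| := abs_sub _ _
          have : p i - p j ≤ |p j - p i| := by
            rw [abs_sub_comm]; exact le_abs_self _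
          linarith
      have hSsub : insert m ((Finset.Icc 0 (k-1)).image g) ⊆ C.toFinset := by
        intro c hc
        rcases Finset.mem_insert.mp hc with h | h
        · exact h ▸ hmC
        · obtain ⟨j, hj, rfl⟩ := Finset.mem_image.mp h
          exact hg1 j hj
      have hmnot : m ∉ (Finset.Icc 0 (k-1)).image g := by
        intro h
        obtain ⟨j, hj, hje⟩ := Finset.mem_image.mp h
        exact hg3 j hj hje
      have hcard1 : ((Finset.Icc 0 (k-1)).image g).card = k := by
        rw [Finset.card_image_of_injOn hinj, Nat.card_Icc]
        omega
      have hfin : k + 1 ≤ k := by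
        calc k + 1 = (insert m ((Finset.Icc 0 (k-1)).image g)).card := by
              rw [Finset.card_insert_of_notMem hmnot, hcard1]
          _ ≤ C.toFinset.card := Finset.card_le_card hSsub
          _ ≤ Multiset.card C := Multiset.toFinset_card_le C
          _ = k := hcard
      omega
end
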